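/- Let H = ℂ², ρ a strictly positive density operator, and let {L¹,…,L^d, I} (1 ≤ d ≤ 3) be orthonormal selfadjoint operators with respect to ⟨A,B⟩_ρ = (1/2)Tr ρ(A*B+BA*). For a unit vector v ∈ ℝ^d, let M^(v) be the PVM given by the spectral decomposition of L_v = Σᵢ vᵢ L^i. Then ĝ(M^(v)) = |v⟩⟨v|, the rank-one projection onto v. -/

import Mathlib

/-!
For `A` in the real span of an orthogonal family of projections `Mₖ`, one has
`⟨A, Mₖ⟩_ρ = cₖ ⟨I, Mₖ⟩_ρ`, so `ĝ(M)(B, A) = ⟨B, A⟩_ρ` (a Bessel equality); in particular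
`ĝ(M)(Lⁱ, L_v) = vᵢ` and `ĝ(M)(L_v, L_v) = 1`. On `ℂ²` at most two of the `Mₖ` are nonzero, and
the coefficients `⟨A, Mₖ⟩_ρ` of an `A ⊥ I` sum to zero, so they form a one-dimensional family and
`ĝ(M)` has rank one on `I^⊥`. Hence `ĝ(Lⁱ, Lʲ) = ĝ(Lⁱ, Lʲ) ĝ(L_v, L_v) = ĝ(Lⁱ, L_v) ĝ(L_v, Lʲ) = vᵢ vⱼ`.
-/

open Matrix ComplexOrder Finset

theorem card_le_of_isIdempotentElem_sum_eq_one {K ι n : Type*} [Field K] [CharZero K] [Fintype ι]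
    [Fintype n] [DecidableEq n] {M : ι → Matrix n n K} (hidem : ∀ k, IsIdempotentElem (M k))
    (hsum : ∑ k, M k = 1) {S : Finset ι} (hS : ∀ k ∈ S, M k ≠ 0) : #S ≤ Fintype.card n := by
  set r : ι → ℕ := fun k => Module.finrank K (LinearMap.range (M k).toLin')
  have htrace : ∀ k, (M k).trace = r k := fun k => by
    rw [← Matrix.trace_toLin'_eq]
    exact (LinearMap.IsIdempotentElem.isProj_range _ ((hidem k).map Matrix.toLinAlgEquiv')).trace
  have hr : ∑ k, (r k : K) = Fintype.card n := by
    simpa [htrace] using congrArg Matrix.trace hsum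
  have hpos : ∀ k ∈ S, 1 ≤ r k := fun k hk => by
    simpa [r, Nat.one_le_iff_ne_zero, LinearMap.range_eq_bot] using hS k hk
  calc #S = ∑ k ∈ S, 1 := card_eq_sum_ones S
    _ ≤ ∑ k ∈ S, r k := sum_le_sum hpos
    _ ≤ ∑ k, r k := sum_le_sum_of_subset (subset_univ _)
    _ = Fintype.card n := by exact_mod_cast hr

/-- Zero-sum vectors supported on at most two points are proportional, so the weighted
"Gram determinant" below vanishes. -/
theorem sum_mul_div_mul_sum_eq_of_card_le_two {ι K : Type*} [Fintype ι] [Field K] {S : Finset ι}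
    (hS : #S ≤ 2) (w : ι → K) {a b c : ι → K} (ha : ∀ k ∉ S, a k = 0) (hb : ∀ k ∉ S, b k = 0)
    (hc : ∀ k ∉ S, c k = 0) (ha₀ : ∑ k, a k = 0) (hb₀ : ∑ k, b k = 0) (hc₀ : ∑ k, c k = 0) :
    (∑ k, a k * b k / w k) * ∑ k, c k * c k / w k =
      (∑ k, a k * c k / w k) * ∑ k, c k * b k / w k := by
  classical
  obtain hS | hS := Nat.lt_or_eq_of_le hS
  · suffices a = 0 by simp [this]
    ext k
    by_cases hk : k ∈ S
    · rwa [Fintype.sum_eq_single k fun j hj => ha j fun hjS =>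
        hj (card_le_one.mp (by omega) j hjS k hk)] at ha₀
    · exact ha k hk
  obtain ⟨x, y, hxy, rfl⟩ := card_eq_two.mp hS
  have sum_pair : ∀ f : ι → K, (∀ k ∉ ({x, y} : Finset ι), f k = 0) → ∑ k, f k = f x + f y :=
    fun f hf => Fintype.sum_eq_add x y hxy fun k hk => hf k (by simp [hk.1, hk.2])
  have hay : a y = -a x := by linear_combination ha₀ - sum_pair a ha
  have hby : b y = -b x := by linear_combination hb₀ - sum_pair b hb
  have hcy : c y = -c x := by linear_combination hc₀ - sum_pair c hc
  rw [sum_pair _ fun k hk => by simp [ha k hk], sum_pair _ fun k hk => by simp [hc k hk],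
    sum_pair _ fun k hk => by simp [ha k hk], sum_pair _ fun k hk => by simp [hc k hk],
    hay, hby, hcy]
  ring

section SLD

variable {n ι : Type*} [Fintype n]

noncomputable def sldInner (ρ : Matrix n n ℂ) : Matrix n n ℂ →ₗ⋆[ℂ] Matrix n n ℂ →ₗ[ℂ] ℂ :=
  LinearMap.mk₂'ₛₗ (starRingEnd ℂ) (RingHom.id ℂ)
    (fun A B => (1 / 2 : ℂ) * (ρ * (Aᴴ * B + B * Aᴴ)).trace)
    (by intros; simp only [conjTranspose_add, mul_add, add_mul, trace_add]; ring)
    (by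
      intros
      simp only [conjTranspose_smul, Matrix.smul_mul, Matrix.mul_smul, mul_add, trace_add,
        trace_smul, smul_eq_mul, starRingEnd_apply]
      ring)
    (by intros; simp only [mul_add, add_mul, trace_add]; ring)
    (by
      intros
      simp only [Matrix.smul_mul, Matrix.mul_smul, mul_add, trace_add, trace_smul, smul_eq_mul,
        RingHom.id_apply]
      ring)

theorem sldInner_apply (ρ A B : Matrix n n ℂ) :
    sldInner ρ A B = (1 / 2 : ℂ) * (ρ * (Aᴴ * B + B * Aᴴ)).trace := rfl

theorem sldInner_sum_ofReal_smul_left {κ : Type*} [Fintype κ] (ρ : Matrix n n ℂ) (c : κ → ℝ)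
    (A : κ → Matrix n n ℂ) (B : Matrix n n ℂ) :
    sldInner ρ (∑ k, (c k : ℂ) • A k) B = ∑ k, (c k : ℂ) * sldInner ρ (A k) B := by
  simp only [map_sum, LinearMap.sum_apply, LinearMap.map_smulₛₗ, LinearMap.smul_apply,
    Complex.conj_ofReal, smul_eq_mul]

variable [DecidableEq n]

/-- The paper's `ĝ(M)`, as a function of the pair `(Lⁱ, Lʲ)`. -/
noncomputable def fisherForm [Fintype ι] (ρ : Matrix n n ℂ) (M : ι → Matrix n n ℂ)
    (A B : Matrix n n ℂ) : ℂ :=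
  ∑ k, sldInner ρ A (M k) * sldInner ρ B (M k) / sldInner ρ 1 (M k)

theorem fisherForm_comm [Fintype ι] (ρ : Matrix n n ℂ) (M : ι → Matrix n n ℂ)
    (A B : Matrix n n ℂ) :
    fisherForm ρ M A B = fisherForm ρ M B A := by
  simp only [fisherForm, mul_comm]

theorem sldInner_one_left (ρ B : Matrix n n ℂ) : sldInner ρ 1 B = (ρ * B).trace := by
  simp only [sldInner_apply, conjTranspose_one, one_mul, mul_one, mul_add, trace_add]
  ring

open scoped MatrixOrder in
theorem Matrix.PosDef.trace_mul_ne_zero {ρ P : Matrix n n ℂ} (hρ : ρ.PosDef) (hP : P.IsHermitian)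
    (hPP : IsIdempotentElem P) (hP0 : P ≠ 0) : (ρ * P).trace ≠ 0 := by
  obtain ⟨y, hy, rfl⟩ :=
    CStarAlgebra.isStrictlyPositive_iff_eq_star_mul_self.mp hρ.isStrictlyPositive
  intro h
  have hyP : ((y * P)ᴴ * (y * P)).trace = 0 := by
    rw [conjTranspose_mul, hP.eq, ← h, Matrix.mul_assoc, trace_mul_comm, star_eq_conjTranspose]
    simp only [Matrix.mul_assoc, hPP.eq]
  rw [trace_conjTranspose_mul_self_eq_zero_iff] at hyP
  lift y to (Matrix n n ℂ)ˣ using hy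
  exact hP0 (by simpa [← Matrix.mul_assoc] using congr(y⁻¹ * $hyP))

variable {ρ : Matrix n n ℂ} {M : ι → Matrix n n ℂ}

theorem sldInner_proj_proj [DecidableEq ι] (hMh : ∀ k, (M k).IsHermitian)
    (hidem : ∀ k, IsIdempotentElem (M k)) (horth : ∀ k l, k ≠ l → M k * M l = 0) (k l : ι) :
    sldInner ρ (M k) (M l) = if k = l then (ρ * M l).trace else 0 := by
  rw [sldInner_apply, (hMh k).eq]
  split_ifs with h
  · rw [h, (hidem l).eq, mul_add, trace_add]
    ring
  · simp [horth k l h, horth l k (Ne.symm h)]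

theorem fisherForm_eq_sldInner [Fintype ι] (hρ : ρ.PosDef) (hMh : ∀ k, (M k).IsHermitian)
    (hidem : ∀ k, IsIdempotentElem (M k)) (horth : ∀ k l, k ≠ l → M k * M l = 0)
    (c : ι → ℝ) (B : Matrix n n ℂ) :
    fisherForm ρ M B (∑ k, (c k : ℂ) • M k) = sldInner ρ B (∑ k, (c k : ℂ) • M k) := by
  classical
  have hcoef : ∀ k, sldInner ρ (∑ l, (c l : ℂ) • M l) (M k) = c k * (ρ * M k).trace := by
    intro k
    rw [sldInner_sum_ofReal_smul_left]
    simp [sldInner_proj_proj hMh hidem horth]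
  simp only [fisherForm, hcoef, sldInner_one_left]
  simp only [map_sum, map_smul, smul_eq_mul]
  refine sum_congr rfl fun k _ => ?_
  by_cases hk : M k = 0
  · simp [hk]
  · have := hρ.trace_mul_ne_zero (hMh k) (hidem k) hk
    field_simp

end SLD

theorem fisherForm_mul_fisherForm_self {ι : Type*} [Fintype ι] {ρ : Matrix (Fin 2) (Fin 2) ℂ}
    {M : ι → Matrix (Fin 2) (Fin 2) ℂ} (hidem : ∀ k, IsIdempotentElem (M k))
    (hsum : ∑ k, M k = 1) {A B C : Matrix (Fin 2) (Fin 2) ℂ} (hA : sldInner ρ A 1 = 0)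
    (hB : sldInner ρ B 1 = 0) (hC : sldInner ρ C 1 = 0) :
    fisherForm ρ M A B * fisherForm ρ M C C = fisherForm ρ M A C * fisherForm ρ M C B := by
  classical
  have hS := card_le_of_isIdempotentElem_sum_eq_one hidem hsum (S := {k | M k ≠ 0}) (by simp)
  have hvanish : ∀ X, ∀ k ∉ ({k | M k ≠ 0} : Finset ι), sldInner ρ X (M k) = 0 := by
    intro X k hk
    rw [show M k = 0 by simpa using hk, map_zero]
  have hsum_zero : ∀ X, sldInner ρ X 1 = 0 → ∑ k, sldInner ρ X (M k) = 0 := by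
    intro X hX
    rw [← map_sum, hsum, hX]
  exact sum_mul_div_mul_sum_eq_of_card_le_two (by simpa using hS) _ (hvanish A) (hvanish B)
    (hvanish C) (hsum_zero A hA) (hsum_zero B hB) (hsum_zero C hC)

theorem stmt12_general {d s : ℕ}
    (ρ : Matrix (Fin 2) (Fin 2) ℂ) (hρ : ρ.PosDef)
    (inn : Matrix (Fin 2) (Fin 2) ℂ → Matrix (Fin 2) (Fin 2) ℂ → ℂ)
    (hinn : ∀ A B, inn A B = (1 / 2 : ℂ) * (ρ * (Aᴴ * B + B * Aᴴ)).trace)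
    (L : Fin d → Matrix (Fin 2) (Fin 2) ℂ)
    (horth : ∀ i j, inn (L i) (L j) = if i = j then 1 else 0)
    (horthI : ∀ i, inn (L i) 1 = 0)
    (v : Fin d → ℝ) (hv : ∑ i, v i ^ 2 = 1)
    (M : Fin s → Matrix (Fin 2) (Fin 2) ℂ)
    (hMh : ∀ n, (M n).IsHermitian) (hMproj : ∀ n, M n * M n = M n)
    (hMorth : ∀ n m, n ≠ m → M n * M m = 0) (hMsum : ∑ n, M n = 1)
    (hspan : ∃ c : Fin s → ℝ, ∑ i, (v i : ℂ) • L i = ∑ n, (c n : ℂ) • M n) :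
    ∀ i j, (∑ n, inn (L i) (M n) * inn (L j) (M n) / inn 1 (M n)) = ((v i * v j : ℝ) : ℂ) := by
  obtain rfl : inn = fun A B => sldInner ρ A B := funext₂ hinn
  beta_reduce at horth horthI ⊢
  obtain ⟨c, hc⟩ := hspan
  set Lv := ∑ i, (v i : ℂ) • L i
  have hLv_one : sldInner ρ Lv 1 = 0 := by
    rw [sldInner_sum_ofReal_smul_left]
    simp [horthI]
  have hL_Lv : ∀ i, sldInner ρ (L i) Lv = v i := by simp [Lv, horth]
  have hLv_Lv : sldInner ρ Lv Lv = 1 := by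
    rw [sldInner_sum_ofReal_smul_left]
    simp only [hL_Lv, ← sq]
    exact_mod_cast hv
  have hfisher : ∀ B, fisherForm ρ M B Lv = sldInner ρ B Lv := fun B => by
    rw [hc]
    exact fisherForm_eq_sldInner hρ hMh hMproj hMorth c B
  intro i j
  calc fisherForm ρ M (L i) (L j) = fisherForm ρ M (L i) (L j) * fisherForm ρ M Lv Lv := by
        rw [hfisher, hLv_Lv, mul_one]
    _ = fisherForm ρ M (L i) Lv * fisherForm ρ M Lv (L j) :=
        fisherForm_mul_fisherForm_self hMproj hMsum (horthI i) (horthI j) hLv_one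
    _ = _ := by
        rw [fisherForm_comm ρ M Lv, hfisher, hfisher, hL_Lv, hL_Lv, Complex.ofReal_mul]

/-- Qubit rank-one attainability: let `ρ` be a strictly positive density operator on `ℂ²`,
and let `{L¹,…,L^d, I}` (`1 ≤ d ≤ 3`) be orthonormal selfadjoint operators w.r.t.
`⟨A,B⟩_ρ = (1/2)Tr ρ(A*B+BA*)`. For a unit vector `v ∈ ℝ^d`, if `M` is the PVM given by the
spectral decomposition of `L_v = Σᵢ vᵢ Lⁱ` (a family of pairwise orthogonal selfadjoint
projections summing to `I` whose span contains `L_v`), then `ĝ(M) = |v⟩⟨v|`. -/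
theorem stmt12 {d s : ℕ} (hd1 : 1 ≤ d) (hd3 : d ≤ 3)
    (ρ : Matrix (Fin 2) (Fin 2) ℂ) (hρ : ρ.PosDef) (hρ1 : ρ.trace = 1)
    (inn : Matrix (Fin 2) (Fin 2) ℂ → Matrix (Fin 2) (Fin 2) ℂ → ℂ)
    (hinn : ∀ A B, inn A B = (1 / 2 : ℂ) * (ρ * (Aᴴ * B + B * Aᴴ)).trace)
    (L : Fin d → Matrix (Fin 2) (Fin 2) ℂ) (hLh : ∀ i, (L i).IsHermitian)
    (horth : ∀ i j, inn (L i) (L j) = if i = j then 1 else 0)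
    (horthI : ∀ i, inn (L i) 1 = 0)
    (v : Fin d → ℝ) (hv : ∑ i, v i ^ 2 = 1)
    (M : Fin s → Matrix (Fin 2) (Fin 2) ℂ)
    (hMh : ∀ n, (M n).IsHermitian) (hMproj : ∀ n, M n * M n = M n)
    (hMorth : ∀ n m, n ≠ m → M n * M m = 0) (hMsum : ∑ n, M n = 1)
    (hspan : ∃ c : Fin s → ℝ, ∑ i, (v i : ℂ) • L i = ∑ n, (c n : ℂ) • M n) :
    ∀ i j, (∑ n, inn (L i) (M n) * inn (L j) (M n) / inn 1 (M n)) = ((v i * v j : ℝ) : ℂ) :=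
  stmt12_general ρ hρ inn hinn L horth horthI v hv M hMh hMproj hMorth hMsum hspan
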